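/- arXiv:2407.02635 — 2 statements merged into one kernel-verified Lean document; each statement's English description precedes it below -/
import Mathlib

section
/- Let k ≥ 3, n ≥ k(k+2), and suppose k divides n. Then in GP(n,k), for the adjacent vertices u_0 and v_0, |W_{v_0 u_0}| − |W_{u_0 v_0}| = 2n/k − 2k − 4. In particular, if n > k(k+2) then |W_{v_0 u_0}| > |W_{u_0 v_0}|, and if n = k(k+2) then |W_{v_0 u_0}| = |W_{u_0 v_0}|. -/
/-- The generalized Petersen graph `GP(n,k)`: vertices are `Sum.inl i` (the outer
vertices `u_i`) and `Sum.inr i` (the inner vertices `v_i`) for `i ∈ ZMod n`, with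
edges `u_i u_{i+1}`, `v_i v_{i+k}` and spokes `u_i v_i`. -/
def genPetersen (n k : ℕ) : SimpleGraph (ZMod n ⊕ ZMod n) :=
  SimpleGraph.fromRel (fun x y =>
    match x, y with
    | Sum.inl i, Sum.inl j => j = i + 1
    | Sum.inr i, Sum.inr j => j = i + (k : ZMod n)
    | Sum.inl i, Sum.inr j => i = j
    | _, _ => False)

/-- `W_{xy}`: the set of vertices strictly closer to `x` than to `y`. -/
def closerSet {V : Type*} (G : SimpleGraph V) (x y : V) : Set V :=
  {w | G.dist w x < G.dist w y}

/-- `_xW_y`: the set of vertices equidistant from `x` and `y`. -/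
def eqDistSet {V : Type*} (G : SimpleGraph V) (x y : V) : Set V :=
  {w | G.dist w x = G.dist w y}

/-- A graph is `ℓ`-distance-balanced if every pair of vertices at distance `ℓ`
is balanced. -/
def IsLDistBalanced {V : Type*} (G : SimpleGraph V) (ℓ : ℕ) : Prop :=
  ∀ x y : V, G.dist x y = ℓ → (closerSet G x y).ncard = (closerSet G y x).ncard

/-- A graph is distance-balanced if every pair of adjacent vertices is balanced. -/
def IsDistBalanced {V : Type*} (G : SimpleGraph V) : Prop :=
  ∀ x y : V, G.Adj x y → (closerSet G x y).ncard = (closerSet G y x).ncard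


lemma dist_eq_of_potential {V : Type*} (G : SimpleGraph V) (t : V) (D : V → ℕ)
    (h0 : ∀ x, D x = 0 ↔ x = t)
    (hlip : ∀ x y, G.Adj x y → D x ≤ D y + 1)
    (hdesc : ∀ x, D x ≠ 0 → ∃ y, G.Adj x y ∧ D y < D x) :
    ∀ x, G.dist x t = D x := by
  have hwalk : ∀ m x, D x ≤ m → ∃ p : G.Walk x t, p.length ≤ D x := by
    intro m
    induction m with
    | zero => intro x hx
              have : x = t := (h0 x).1 (Nat.le_zero.1 hx)
              subst this; exact ⟨SimpleGraph.Walk.nil, by simp⟩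
    | succ m ih =>
        intro x hx
        by_cases hz : D x = 0
        · have : x = t := (h0 x).1 hz
          subst this; exact ⟨SimpleGraph.Walk.nil, by simp⟩
        · obtain ⟨y, hadj, hy⟩ := hdesc x hz
          obtain ⟨p, hp⟩ := ih y (by omega)
          exact ⟨SimpleGraph.Walk.cons hadj p, by simp; omega⟩
  have hlow0 : ∀ x y (p : G.Walk x y), D x ≤ D y + p.length := by
    intro x y p
    induction p with
    | nil => simp
    | cons hadj p ih =>
        have := hlip _ _ hadj
        simp only [SimpleGraph.Walk.length_cons]
        omega
  have hlow : ∀ x (p : G.Walk x t), D x ≤ p.length := by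
    intro x p
    have := hlow0 x t p
    have ht : D t = 0 := (h0 t).mpr rfl
    omega
  intro x
  obtain ⟨p, hp⟩ := hwalk (D x) x le_rfl
  have h1 : G.dist x t ≤ D x := (SimpleGraph.dist_le p).trans hp
  have hr : G.Reachable x t := ⟨p⟩
  obtain ⟨q, hq⟩ := hr.exists_walk_length_eq_dist
  have h2 : D x ≤ G.dist x t := hq ▸ hlow x q
  omega

def gU (k a : ℕ) : ℕ := min a (min (a/k + a%k + 2) (a/k + (k - a%k) + 3))
def gX (k a : ℕ) : ℕ := min (a+1) (min (a/k + a%k + 1) (a/k + (k - a%k) + 2))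
def gV (k a : ℕ) : ℕ := if a % k = 0 then a/k else
  min (a+2) (min (a/k + a%k + 2) (a/k + (k - a%k) + 3))

section arith
variable {k : ℕ}

private lemma qdiv {q r : ℕ} (h : r < k) : (k*q + r)/k = q := by
  rw [Nat.mul_add_div (by omega), Nat.div_eq_of_lt h, Nat.add_zero]

private lemma qmod {q r : ℕ} (h : r < k) : (k*q + r) % k = r := by
  rw [Nat.mul_add_mod, Nat.mod_eq_of_lt h]

private lemma mul_pred {k q : ℕ} (h : 1 ≤ q) : k*(q-1) + k = k*q := by
  have h2 : (q-1) + 1 = q := Nat.succ_pred_eq_of_pos h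
  calc k*(q-1) + k = k*((q-1)+1) := by ring
  _ = k*q := by rw [h2]

private lemma destruct (hk0 : 0 < k) (a : ℕ) :
    ∃ q r, r < k ∧ a = k*q + r := ⟨a/k, a%k, Nat.mod_lt _ hk0, (Nat.div_add_mod a k).symm⟩

lemma gU_eq {q r : ℕ} (h : r < k) :
    gU k (k*q+r) = min (k*q+r) (min (q+r+2) (q+(k-r)+3)) := by
  unfold gU; rw [qdiv h, qmod h]

lemma gX_eq {q r : ℕ} (h : r < k) :
    gX k (k*q+r) = min (k*q+r+1) (min (q+r+1) (q+(k-r)+2)) := by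
  unfold gX; rw [qdiv h, qmod h]

lemma gV_eq0 {q : ℕ} (h : 0 < k) : gV k (k*q) = q := by
  unfold gV
  have h1 : (k*q) % k = 0 := by simp [Nat.mul_mod_right]
  rw [h1]; simp [Nat.mul_div_cancel_left _ h]

lemma gV_eq1 {q r : ℕ} (h : r < k) (hr : r ≠ 0) :
    gV k (k*q+r) = min (k*q+r+2) (min (q+r+2) (q+(k-r)+3)) := by
  unfold gV; rw [qdiv h, qmod h, if_neg hr]

variable (hk : 3 ≤ k)
include hk

-- 1-Lipschitz
lemma gU_lip1 (a : ℕ) : gU k (a+1) ≤ gU k a + 1 ∧ gU k a ≤ gU k (a+1) + 1 := by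
  obtain ⟨q, r, hr, rfl⟩ := destruct (k := k) (by omega) a
  by_cases h : r + 1 < k
  · have e1 := gU_eq (k := k) (q := q) (r := r) hr
    have e2 := gU_eq (k := k) (q := q) (r := r+1) h
    have : k*q + r + 1 = k*q + (r+1) := by omega
    rw [this, e2, e1]; omega
  · have hr1 : r = k - 1 := by omega
    have e1 := gU_eq (k := k) (q := q) (r := r) hr
    have e2 := gU_eq (k := k) (q := q+1) (r := 0) (by omega)
    have hmul : k*(q+1) = k*q + k := by ring
    have : k*q + r + 1 = k*(q+1) + 0 := by omega
    rw [this, e2, e1]; omega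

lemma gX_lip1 (a : ℕ) : gX k (a+1) ≤ gX k a + 1 ∧ gX k a ≤ gX k (a+1) + 1 := by
  obtain ⟨q, r, hr, rfl⟩ := destruct (k := k) (by omega) a
  by_cases h : r + 1 < k
  · have e1 := gX_eq (k := k) (q := q) (r := r) hr
    have e2 := gX_eq (k := k) (q := q) (r := r+1) h
    have : k*q + r + 1 = k*q + (r+1) := by omega
    rw [this, e2, e1]; omega
  · have e1 := gX_eq (k := k) (q := q) (r := r) hr
    have e2 := gX_eq (k := k) (q := q+1) (r := 0) (by omega)
    have hmul : k*(q+1) = k*q + k := by ring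
    have : k*q + r + 1 = k*(q+1) + 0 := by omega
    rw [this, e2, e1]; omega

-- k-step Lipschitz
lemma gX_lipk (a : ℕ) : gX k (a+k) ≤ gX k a + 1 ∧ gX k a ≤ gX k (a+k) + 1 := by
  obtain ⟨q, r, hr, rfl⟩ := destruct (k := k) (by omega) a
  have e1 := gX_eq (k := k) (q := q) (r := r) hr
  have e2 := gX_eq (k := k) (q := q+1) (r := r) hr
  have : k*q + r + k = k*(q+1) + r := by ring
  rw [this, e2, e1]
  have : k*(q+1) + r = k*q+r+k := by ring
  rw [this]
  have hq : q ≤ k*q := Nat.le_mul_of_pos_left _ (by omega)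
  omega

lemma gV_lipk (a : ℕ) : gV k (a+k) ≤ gV k a + 1 ∧ gV k a ≤ gV k (a+k) + 1 := by
  obtain ⟨q, r, hr, rfl⟩ := destruct (k := k) (by omega) a
  have hstep : k*q + r + k = k*(q+1) + r := by ring
  by_cases h : r = 0
  · subst h
    have e1 := gV_eq0 (k := k) (q := q) (by omega)
    have e2 := gV_eq0 (k := k) (q := q+1) (by omega)
    rw [Nat.add_zero] at *
    have : k*q + k = k*(q+1) := by ring
    rw [this, e2, e1]; omega
  · have e1 := gV_eq1 (k := k) (q := q) (r := r) hr h
    have e2 := gV_eq1 (k := k) (q := q+1) (r := r) hr h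
    rw [hstep, e2, e1]
    have : k*(q+1) + r = k*q+r+k := by ring
    rw [this]
    have hq : q ≤ k*q := Nat.le_mul_of_pos_left _ (by omega)
    omega

-- bounds
lemma gU_le (a : ℕ) : gU k a ≤ a := by
  obtain ⟨q, r, hr, rfl⟩ := destruct (k := k) (by omega) a
  rw [gU_eq hr]; omega
lemma gX_le (a : ℕ) : gX k a ≤ a + 1 := by
  obtain ⟨q, r, hr, rfl⟩ := destruct (k := k) (by omega) a
  rw [gX_eq hr]; omega
lemma gV_le (a : ℕ) : gV k a ≤ a + 2 := by
  obtain ⟨q, r, hr, rfl⟩ := destruct (k := k) (by omega) a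
  by_cases h0 : r = 0
  · subst h0; rw [Nat.add_zero, gV_eq0 (by omega)]
    have hq : q ≤ k*q := Nat.le_mul_of_pos_left _ (by omega)
    omega
  · rw [gV_eq1 hr h0]; omega
lemma gU_ge (a : ℕ) : a/k ≤ gU k a := by
  obtain ⟨q, r, hr, rfl⟩ := destruct (k := k) (by omega) a
  rw [gU_eq hr, qdiv hr]
  have hq : q ≤ k*q := Nat.le_mul_of_pos_left _ (by omega)
  omega
lemma gX_ge (a : ℕ) : a/k ≤ gX k a := by
  obtain ⟨q, r, hr, rfl⟩ := destruct (k := k) (by omega) a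
  rw [gX_eq hr, qdiv hr]
  have hq : q ≤ k*q := Nat.le_mul_of_pos_left _ (by omega)
  omega
lemma gV_ge (a : ℕ) : a/k ≤ gV k a := by
  obtain ⟨q, r, hr, rfl⟩ := destruct (k := k) (by omega) a
  rw [qdiv hr]
  by_cases h0 : r = 0
  · subst h0; rw [Nat.add_zero, gV_eq0 (by omega)]
  · rw [gV_eq1 hr h0]
    have hq : q ≤ k*q := Nat.le_mul_of_pos_left _ (by omega)
    omega

lemma gU_zero : gU k 0 = 0 := by
  have := gU_eq (k := k) (q := 0) (r := 0) (by omega)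
  simpa using this
lemma gX_zero : gX k 0 = 1 := by
  have := gX_eq (k := k) (q := 0) (r := 0) (by omega)
  simp only [Nat.mul_zero, Nat.add_zero, Nat.zero_add] at this
  rw [this]; omega
lemma gV_zero : gV k 0 = 0 := by
  have := gV_eq0 (k := k) (q := 0) (by omega)
  simpa using this

lemma gU_eq_zero (a : ℕ) : gU k a = 0 ↔ a = 0 := by
  constructor
  · intro h
    obtain ⟨q, r, hr, rfl⟩ := destruct (k := k) (by omega) a
    rw [gU_eq hr] at h; omega
  · rintro rfl; exact gU_zero hk
lemma gX_pos (a : ℕ) : 1 ≤ gX k a := by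
  obtain ⟨q, r, hr, rfl⟩ := destruct (k := k) (by omega) a
  rw [gX_eq hr]; omega
lemma gV_eq_zero (a : ℕ) : gV k a = 0 ↔ a = 0 := by
  constructor
  · intro h
    obtain ⟨q, r, hr, rfl⟩ := destruct (k := k) (by omega) a
    by_cases h0 : r = 0
    · subst h0; rw [Nat.add_zero, gV_eq0 (by omega)] at h; subst h; simp
    · rw [gV_eq1 hr h0] at h; omega
  · rintro rfl; exact gV_zero hk

-- spoke comparisons
lemma gUX (a : ℕ) : gX k a ≤ gU k a + 1 ∧ gU k a ≤ gX k a + 1 := by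
  obtain ⟨q, r, hr, rfl⟩ := destruct (k := k) (by omega) a
  rw [gU_eq hr, gX_eq hr]; omega
lemma gXV (a : ℕ) : gV k a ≤ gX k a + 1 ∧ gX k a ≤ gV k a + 1 := by
  obtain ⟨q, r, hr, rfl⟩ := destruct (k := k) (by omega) a
  by_cases h0 : r = 0
  · subst h0
    rw [Nat.add_zero, gV_eq0 (by omega)]
    have := gX_eq (k := k) (q := q) (r := 0) (by omega)
    rw [Nat.add_zero] at this; rw [this]
    have hq : q ≤ k*q := Nat.le_mul_of_pos_left _ (by omega)
    omega
  · rw [gV_eq1 hr h0, gX_eq hr]; omega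

-- small-argument swap (args ≤ k)
lemma gX_swap {a : ℕ} (ha : a ≤ k) :
    gX k (k-a) ≤ gX k a + 1 ∧ gX k a ≤ gX k (k-a) + 1 := by
  by_cases h0 : a = 0
  · subst h0
    rw [Nat.sub_zero, gX_zero hk]
    have := gX_eq (k := k) (q := 1) (r := 0) (by omega)
    have h1 : k * 1 + 0 = k := by omega
    rw [h1] at this; rw [this]; omega
  · by_cases h1 : a = k
    · rw [h1, Nat.sub_self, gX_zero hk]
      have := gX_eq (k := k) (q := 1) (r := 0) (by omega)
      have h1 : k * 1 + 0 = k := by omega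
      rw [h1] at this; rw [this]; omega
    · have e1 := gX_eq (k := k) (q := 0) (r := a) (by omega)
      have e2 := gX_eq (k := k) (q := 0) (r := k - a) (by omega)
      simp only [Nat.mul_zero, Nat.zero_add] at e1 e2
      rw [e1, e2]; omega

lemma gV_swap {a : ℕ} (ha : a ≤ k) :
    gV k (k-a) ≤ gV k a + 1 ∧ gV k a ≤ gV k (k-a) + 1 := by
  by_cases h0 : a = 0
  · subst h0
    rw [Nat.sub_zero, gV_zero hk]
    have := gV_eq0 (k := k) (q := 1) (by omega)
    have h1 : k * 1 = k := by omega
    rw [h1] at this; rw [this]; omega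
  · by_cases h1 : a = k
    · rw [h1, Nat.sub_self, gV_zero hk]
      have := gV_eq0 (k := k) (q := 1) (by omega)
      have h1 : k * 1 = k := by omega
      rw [h1] at this; rw [this]; omega
    · have e1 := gV_eq1 (k := k) (q := 0) (r := a) (by omega) h0
      have e2 := gV_eq1 (k := k) (q := 0) (r := k - a) (by omega) (by omega)
      simp only [Nat.mul_zero, Nat.zero_add] at e1 e2
      rw [e1, e2]; omega

-- small bound / big bound
lemma g_small_le {a : ℕ} (ha : a ≤ k) : gU k a ≤ k + 2 ∧ gX k a ≤ k + 2 ∧ gV k a ≤ k + 2 := by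
  refine ⟨(gU_le hk a).trans (by omega), (gX_le hk a).trans (by omega), (gV_le hk a).trans (by omega)⟩

lemma g_big_ge {a : ℕ} (ha : k*(k+1) ≤ a) :
    k + 1 ≤ gU k a ∧ k + 1 ≤ gX k a ∧ k + 1 ≤ gV k a := by
  have hdiv : k + 1 ≤ a / k := (Nat.le_div_iff_mul_le (by omega)).2 (by nlinarith)
  exact ⟨hdiv.trans (gU_ge hk a), hdiv.trans (gX_ge hk a), hdiv.trans (gV_ge hk a)⟩

-- descent lemmas
lemma descU {a : ℕ} (ha : 1 ≤ a) :
    gU k (a-1) < gU k a ∨ gU k (a+1) < gU k a ∨ gX k a < gU k a := by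
  obtain ⟨q, r, hr, rfl⟩ := destruct (k := k) (by omega) a
  have e1 := gU_eq (k := k) (q := q) (r := r) hr
  have eX := gX_eq (k := k) (q := q) (r := r) hr
  have hq : q ≤ k*q := Nat.le_mul_of_pos_left _ (by omega)
  by_cases h0 : r = 0
  · subst h0
    -- a = k*q, q ≥ 1 ; a-1 = k*(q-1) + (k-1)
    have hq1 : 1 ≤ q := by
      rcases Nat.eq_zero_or_pos q with h|h
      · exfalso; rw [h] at ha; simp at ha
      · exact h
    have hmul := mul_pred (k := k) hq1
    have em := gU_eq (k := k) (q := q-1) (r := k-1) (by omega)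
    have h2 : k*q + 0 - 1 = k*(q-1) + (k-1) := by omega
    rw [h2, em, e1, eX]
    simp only [Nat.add_zero, Nat.sub_zero] at *
    omega
  · -- r ≥ 1: a-1 = k*q + (r-1)
    have em := gU_eq (k := k) (q := q) (r := r-1) (by omega)
    have h2 : k*q + r - 1 = k*q + (r-1) := by omega
    by_cases h3 : r + 1 < k
    · have ep := gU_eq (k := k) (q := q) (r := r+1) h3
      have h4 : k*q + r + 1 = k*q + (r+1) := by omega
      rw [h2, em, h4, ep, e1, eX]
      have h5 : k*q + (r-1) = k*q + r - 1 := by omega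
      have h6 : k*q + (r+1) = k*q + r + 1 := by omega
      rw [h5, h6]
      omega
    · have hrk : r = k - 1 := by omega
      have ep := gU_eq (k := k) (q := q+1) (r := 0) (by omega)
      have hmul2 : k*(q+1) = k*q + k := by ring
      have h4 : k*q + r + 1 = k*(q+1) + 0 := by omega
      rw [h2, em, h4, ep, e1, eX]
      have h5 : k*q + (r-1) = k*q + r - 1 := by omega
      have h6 : k*(q+1) + 0 = k*q + r + 1 := by omega
      rw [h5, h6]
      omega

lemma descXV {a : ℕ} (ha : 1 ≤ a) :
    gX k (a-1) < gX k a ∨ gX k (a+1) < gX k a ∨ gV k a < gX k a := by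
  obtain ⟨q, r, hr, rfl⟩ := destruct (k := k) (by omega) a
  have e1 := gX_eq (k := k) (q := q) (r := r) hr
  have hq : q ≤ k*q := Nat.le_mul_of_pos_left _ (by omega)
  by_cases h0 : r = 0
  · subst h0
    have hq1 : 1 ≤ q := by
      rcases Nat.eq_zero_or_pos q with h|h
      · exfalso; rw [h] at ha; simp at ha
      · exact h
    have eV := gV_eq0 (k := k) (q := q) (by omega)
    have hmul := mul_pred (k := k) hq1
    have em := gX_eq (k := k) (q := q-1) (r := k-1) (by omega)
    simp only [Nat.add_zero, Nat.sub_zero] at e1 ha ⊢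
    have h2 : k*q - 1 = k*(q-1) + (k-1) := by omega
    rw [e1, eV, h2, em]
    omega
  · have eV := gV_eq1 (k := k) (q := q) (r := r) hr h0
    have em := gX_eq (k := k) (q := q) (r := r-1) (by omega)
    have h2 : k*q + r - 1 = k*q + (r-1) := by omega
    by_cases h3 : r + 1 < k
    · have ep := gX_eq (k := k) (q := q) (r := r+1) h3
      have h4 : k*q + r + 1 = k*q + (r+1) := by omega
      rw [h2, em, h4, ep, e1, eV]
      have h5 : k*q + (r-1) = k*q + r - 1 := by omega
      have h6 : k*q + (r+1) = k*q + r + 1 := by omega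
      rw [h5, h6]
      omega
    · have ep := gX_eq (k := k) (q := q+1) (r := 0) (by omega)
      have hmul2 : k*(q+1) = k*q + k := by ring
      have h4 : k*q + r + 1 = k*(q+1) + 0 := by omega
      rw [h2, em, h4, ep, e1, eV]
      have h5 : k*q + (r-1) = k*q + r - 1 := by omega
      have h6 : k*(q+1) + 0 = k*q + r + 1 := by omega
      rw [h5, h6]
      omega

lemma descXU {a : ℕ} (ha : 1 ≤ a) :
    gU k a < gX k a ∨ (k ≤ a ∧ gX k (a-k) < gX k a) ∨ (a < k ∧ gX k (k-a) < gX k a) := by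
  obtain ⟨q, r, hr, rfl⟩ := destruct (k := k) (by omega) a
  have e1 := gX_eq (k := k) (q := q) (r := r) hr
  have eU := gU_eq (k := k) (q := q) (r := r) hr
  have hq : q ≤ k*q := Nat.le_mul_of_pos_left _ (by omega)
  by_cases hq1 : 1 ≤ q
  · -- a ≥ k; neighbor a-k has (q-1, r)
    have hmul := mul_pred (k := k) hq1
    have em := gX_eq (k := k) (q := q-1) (r := r) hr
    have h2 : k*q + r - k = k*(q-1) + r := by omega
    rw [e1, eU, h2, em]
    omega
  · -- q = 0, a = r
    have hq0 : q = 0 := by omega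
    subst hq0
    simp only [Nat.mul_zero, Nat.zero_add] at e1 eU ⊢
    by_cases hak : r = k  -- impossible since r < k
    · omega
    · have em := gX_eq (k := k) (q := 0) (r := k - r) (by omega)
      simp only [Nat.mul_zero, Nat.zero_add] at em
      rw [e1, eU, em]
      omega

lemma descV {a : ℕ} (ha : 1 ≤ a) :
    gX k a < gV k a ∨ (a % k = 0 ∧ k ≤ a ∧ gV k (a-k) < gV k a) := by
  obtain ⟨q, r, hr, rfl⟩ := destruct (k := k) (by omega) a
  have eX := gX_eq (k := k) (q := q) (r := r) hr
  have hq : q ≤ k*q := Nat.le_mul_of_pos_left _ (by omega)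
  by_cases h0 : r = 0
  · subst h0
    have hq1 : 1 ≤ q := by
      rcases Nat.eq_zero_or_pos q with h|h
      · exfalso; rw [h] at ha; simp at ha
      · exact h
    have eV := gV_eq0 (k := k) (q := q) (by omega)
    have hmul := mul_pred (k := k) hq1
    have em := gV_eq0 (k := k) (q := q-1) (by omega)
    simp only [Nat.add_zero, Nat.sub_zero] at eX ha ⊢
    have h2 : k*q - k = k*(q-1) := by omega
    right
    refine ⟨by simp [Nat.mul_mod_right], by omega, ?_⟩
    rw [h2, em, eV]; omega
  · left
    have eV := gV_eq1 (k := k) (q := q) (r := r) hr h0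
    rw [eX, eV]; omega

-- comparison lemmas
lemma cmp_inner0 {a : ℕ} (h : a % k = 0) : gV k a = a/k ∧ gX k a = a/k + 1 := by
  obtain ⟨q, rfl⟩ : ∃ q, a = k*q :=
    ⟨a/k, (Nat.mul_div_cancel' (Nat.dvd_of_mod_eq_zero h)).symm⟩
  have eX := gX_eq (k := k) (q := q) (r := 0) (by omega)
  rw [Nat.add_zero] at eX
  have hq : q ≤ k*q := Nat.le_mul_of_pos_left _ (by omega)
  have hdiv : (k*q)/k = q := Nat.mul_div_cancel_left q (by omega)
  rw [hdiv, gV_eq0 (by omega), eX]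
  constructor
  · rfl
  · omega

lemma cmp_inner1 {a : ℕ} (h : a % k ≠ 0) : gX k a + 1 = gV k a := by
  obtain ⟨q, r, hr, rfl⟩ := destruct (k := k) (by omega) a
  rw [qmod hr] at h
  rw [gX_eq hr, gV_eq1 hr h]
  omega

lemma cmp_outer_big {a : ℕ} (h : k + 3 ≤ 2*a) : gX k a + 1 = gU k a := by
  obtain ⟨q, r, hr, rfl⟩ := destruct (k := k) (by omega) a
  have hq : q ≤ k*q := Nat.le_mul_of_pos_left _ (by omega)
  rw [gX_eq hr, gU_eq hr]
  by_cases hq1 : 1 ≤ q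
  · have h3q : 3*q ≤ k*q := Nat.mul_le_mul_right q hk
    have hkq : k*1 ≤ k*q := Nat.mul_le_mul_left k hq1
    omega
  · have : q = 0 := by omega
    subst this
    simp only [Nat.mul_zero, Nat.zero_add] at *
    omega

lemma cmp_outer_small {a : ℕ} (h : 2*a ≤ k+1) : gU k a = a ∧ gX k a = a + 1 := by
  have hak : a < k := by omega
  have e1 := gU_eq (k := k) (q := 0) (r := a) hak
  have e2 := gX_eq (k := k) (q := 0) (r := a) hak
  simp only [Nat.mul_zero, Nat.zero_add] at e1 e2
  rw [e1, e2]
  omega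

lemma cmp_outer_mid {a : ℕ} (h : 2*a = k+2) : gU k a = a ∧ gX k a = a := by
  have hak : a < k := by omega
  have e1 := gU_eq (k := k) (q := 0) (r := a) hak
  have e2 := gX_eq (k := k) (q := 0) (r := a) hak
  simp only [Nat.mul_zero, Nat.zero_add] at e1 e2
  rw [e1, e2]
  omega

end arith

def DU (n k : ℕ) : ZMod n ⊕ ZMod n → ℕ
  | Sum.inl x => min (gU k x.val) (gU k (n - x.val))
  | Sum.inr x => min (gX k x.val) (gX k (n - x.val))

def DV (n k : ℕ) : ZMod n ⊕ ZMod n → ℕ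
  | Sum.inl x => min (gX k x.val) (gX k (n - x.val))
  | Sum.inr x => min (gV k x.val) (gV k (n - x.val))

section graph

variable {n k : ℕ} (hk : 3 ≤ k) (hn : k*(k+2) ≤ n)

lemma n_pos (hk : 3 ≤ k) (hn : k*(k+2) ≤ n) : 0 < n := by nlinarith
lemma k_lt_n (hk : 3 ≤ k) (hn : k*(k+2) ≤ n) : k + 3 < n := by nlinarith
lemma n_big (hk : 3 ≤ k) (hn : k*(k+2) ≤ n) : k*(k+1) + k ≤ n := by nlinarith

section valfacts
variable [NeZero n]

lemma val_natCast_lt {a : ℕ} (h : a < n) : ((a : ZMod n)).val = a :=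
  ZMod.val_cast_of_lt h

lemma cast_val_eq (x : ZMod n) : ((x.val : ℕ) : ZMod n) = x :=
  ZMod.natCast_rightInverse x

lemma val_add_nat (x : ZMod n) (c : ℕ) : (x + (c : ZMod n)).val = (x.val + c) % n := by
  rw [ZMod.val_add, ZMod.val_natCast]
  conv_rhs => rw [Nat.add_mod]
  rw [Nat.mod_eq_of_lt (ZMod.val_lt x)]

lemma val_sub_nat (x : ZMod n) {c : ℕ} (hc : c ≤ n) :
    (x - (c : ZMod n)).val = (x.val + (n - c)) % n := by
  have h1 : x - (c : ZMod n) = x + ((n - c : ℕ) : ZMod n) := by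
    have h2 : ((c : ℕ) : ZMod n) + ((n - c : ℕ) : ZMod n) = 0 := by
      rw [← Nat.cast_add]
      have h3 : c + (n - c) = n := by omega
      rw [h3, ZMod.natCast_self]
    have : ((n - c : ℕ) : ZMod n) = - ((c : ℕ) : ZMod n) := by
      rw [eq_neg_iff_add_eq_zero, add_comm]
      exact h2
    rw [this]
    ring
  rw [h1, val_add_nat]

lemma mod_sub_lt {a c : ℕ} (ha : a < n) (hc : c ≤ n) (h : c ≤ a) :
    (a + (n - c)) % n = a - c := by
  have h1 : a + (n - c) = n + (a - c) := by omega
  rw [h1, Nat.add_mod_left, Nat.mod_eq_of_lt (by omega)]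

lemma mod_sub_ge {a c : ℕ} (ha : a < n) (hc : c ≤ n) (h : a < c) :
    (a + (n - c)) % n = a + n - c := by
  rw [Nat.mod_eq_of_lt (by omega)]; omega

end valfacts

section adj
variable [NeZero n]

open Sum

lemma adj_outer (hk : 3 ≤ k) (hn : k*(k+2) ≤ n) (i : ZMod n) :
    (genPetersen n k).Adj (inl i) (inl (i+1)) := by
  have hkn := k_lt_n hk hn
  rw [genPetersen, SimpleGraph.fromRel_adj]
  refine ⟨?_, Or.inl rfl⟩
  intro h
  have h2 : i = i + 1 := by simpa using h
  have h3 : (0 : ZMod n) = 1 := by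
    have := h2
    nth_rewrite 1 [← add_zero i] at this
    exact add_left_cancel this
  have h4 : ((1 : ℕ) : ZMod n).val = 1 := val_natCast_lt (by omega)
  rw [Nat.cast_one, ← h3] at h4
  simp at h4

lemma adj_inner (hk : 3 ≤ k) (hn : k*(k+2) ≤ n) (i : ZMod n) :
    (genPetersen n k).Adj (inr i) (inr (i + (k : ZMod n))) := by
  have hkn := k_lt_n hk hn
  rw [genPetersen, SimpleGraph.fromRel_adj]
  refine ⟨?_, Or.inl rfl⟩
  intro h
  have h2 : i = i + (k : ZMod n) := by simpa using h
  have h3 : (0 : ZMod n) = (k : ZMod n) := by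
    have := h2
    nth_rewrite 1 [← add_zero i] at this
    exact add_left_cancel this
  have h4 : ((k : ℕ) : ZMod n).val = k := val_natCast_lt (by omega)
  rw [← h3] at h4
  simp only [ZMod.val_zero] at h4
  omega

lemma adj_spoke (i : ZMod n) : (genPetersen n k).Adj (inl i) (inr i) := by
  rw [genPetersen, SimpleGraph.fromRel_adj]
  exact ⟨by simp, Or.inl rfl⟩

end adj

section steps
variable [NeZero n]
open Sum

-- generic 1-step lemma
lemma Fstep1 {g : ℕ → ℕ}
    (hg : ∀ a, g (a+1) ≤ g a + 1 ∧ g a ≤ g (a+1) + 1) (x : ZMod n) :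
    min (g (x+1).val) (g (n - (x+1).val)) ≤ min (g x.val) (g (n - x.val)) + 1 ∧
    min (g x.val) (g (n - x.val)) ≤ min (g (x+1).val) (g (n - (x+1).val)) + 1 := by
  have hlt := ZMod.val_lt x
  have hv : (x + 1).val = (x.val + 1) % n := by
    have := val_add_nat x 1
    simpa using this
  by_cases hw : x.val + 1 = n
  · rw [hv, hw, Nat.mod_self]
    have h1 := hg x.val
    have h2 := hg 0
    rw [hw] at h1
    have e0 : n - 0 = n := by omega
    have e1 : n - x.val = 1 := by omega
    rw [e0, e1]
    have e2 : (0:ℕ) + 1 = 1 := rfl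
    rw [e2] at h2
    omega
  · have hlt1 : x.val + 1 < n := by omega
    rw [hv, Nat.mod_eq_of_lt hlt1]
    have h1 := hg x.val
    have h2 := hg (n - x.val - 1)
    have e1 : n - x.val - 1 + 1 = n - x.val := by omega
    rw [e1] at h2
    have e2 : n - (x.val + 1) = n - x.val - 1 := by omega
    rw [e2]
    omega

-- generic k-step lemma
lemma Fstepk (hk : 3 ≤ k) (hn : k*(k+2) ≤ n) {g : ℕ → ℕ}
    (hgk : ∀ a, g (a+k) ≤ g a + 1 ∧ g a ≤ g (a+k) + 1)
    (hswap : ∀ a, a ≤ k → g (k-a) ≤ g a + 1 ∧ g a ≤ g (k-a) + 1)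
    (hsmall : ∀ a, a ≤ k → g a ≤ k + 2)
    (hbig : ∀ a, k*(k+1) ≤ a → k + 1 ≤ g a)
    (x : ZMod n) :
    min (g (x + (k:ZMod n)).val) (g (n - (x + (k:ZMod n)).val))
      ≤ min (g x.val) (g (n - x.val)) + 1 ∧
    min (g x.val) (g (n - x.val))
      ≤ min (g (x + (k:ZMod n)).val) (g (n - (x + (k:ZMod n)).val)) + 1 := by
  have hlt := ZMod.val_lt x
  have hkn : k + 3 < n := k_lt_n hk hn
  have hnb : k*(k+1) + k ≤ n := n_big hk hn
  have hv : (x + (k:ZMod n)).val = (x.val + k) % n := val_add_nat x k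
  rcases lt_trichotomy (x.val + k) n with hw | hw | hw
  · rw [hv, Nat.mod_eq_of_lt hw]
    have h1 := hgk x.val
    have h2 := hgk (n - x.val - k)
    have e1 : n - x.val - k + k = n - x.val := by omega
    rw [e1] at h2
    have e2 : n - (x.val + k) = n - x.val - k := by omega
    rw [e2]
    omega
  · rw [hv, hw, Nat.mod_self]
    have h1 := hgk 0
    have h2 := hgk (n - k)
    have e1 : n - k + k = n := by omega
    rw [e1] at h2
    have e2 : (0:ℕ) + k = k := by omega
    rw [e2] at h1
    have e3 : n - 0 = n := by omega
    have e4 : n - x.val = k := by omega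
    have e5 : x.val = n - k := by omega
    rw [e3, e4, e5]
    omega
  · -- wrap: x.val + k - n = k - b where b = n - x.val ∈ [1, k-1]
    have hb1 : 1 ≤ n - x.val := by omega
    have hb2 : n - x.val < k := by omega
    set b := n - x.val with hbdef
    have hval : (x.val + k) % n = k - b := by
      rw [Nat.mod_eq_sub_mod (by omega), Nat.mod_eq_of_lt (by omega)]
      omega
    rw [hv, hval]
    have e1 : n - (k - b) = n - k + b := by omega
    rw [e1]
    have e2 : x.val = n - b := by omega
    rw [e2]
    have h1 := hswap b (by omega)
    have h2 := hsmall b (by omega)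
    have h3 := hsmall (k - b) (by omega)
    have h4 := hbig (n - b) (by omega)
    have h5 := hbig (n - k + b) (by omega)
    omega

-- spoke step
lemma Fspoke {g h : ℕ → ℕ}
    (hgh : ∀ a, g a ≤ h a + 1 ∧ h a ≤ g a + 1) (x : ZMod n) :
    min (g x.val) (g (n - x.val)) ≤ min (h x.val) (h (n - x.val)) + 1 ∧
    min (h x.val) (h (n - x.val)) ≤ min (g x.val) (g (n - x.val)) + 1 := by
  have h1 := hgh x.val
  have h2 := hgh (n - x.val)
  omega

end steps

section lip
variable [NeZero n]
open Sum

lemma DU_inl (x : ZMod n) : DU n k (inl x) = min (gU k x.val) (gU k (n - x.val)) := rfl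
lemma DU_inr (x : ZMod n) : DU n k (inr x) = min (gX k x.val) (gX k (n - x.val)) := rfl
lemma DV_inl (x : ZMod n) : DV n k (inl x) = min (gX k x.val) (gX k (n - x.val)) := rfl
lemma DV_inr (x : ZMod n) : DV n k (inr x) = min (gV k x.val) (gV k (n - x.val)) := rfl

lemma lipU (hk : 3 ≤ k) (hn : k*(k+2) ≤ n) :
    ∀ x y, (genPetersen n k).Adj x y → DU n k x ≤ DU n k y + 1 := by
  intro x y h
  rw [genPetersen, SimpleGraph.fromRel_adj] at h
  obtain ⟨hne, hrel⟩ := h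
  rcases x with i|i <;> rcases y with j|j
  · have hrel' : j = i + 1 ∨ i = j + 1 := hrel
    rcases hrel' with rfl | rfl
    · rw [DU_inl, DU_inl]
      exact (Fstep1 (fun a => gU_lip1 hk a) i).2
    · rw [DU_inl, DU_inl]
      exact (Fstep1 (fun a => gU_lip1 hk a) j).1
  · have hrel' : i = j ∨ False := hrel
    have hij : i = j := by tauto
    subst hij
    rw [DU_inl, DU_inr]
    exact (Fspoke (fun a => ⟨(gUX hk a).2, (gUX hk a).1⟩) i).1
  · have hrel' : False ∨ j = i := hrel
    have hij : j = i := by tauto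
    subst hij
    rw [DU_inl, DU_inr]
    exact (Fspoke (fun a => ⟨(gUX hk a).2, (gUX hk a).1⟩) j).2
  · have hrel' : j = i + (k:ZMod n) ∨ i = j + (k:ZMod n) := hrel
    rcases hrel' with rfl | rfl
    · rw [DU_inr, DU_inr]
      exact (Fstepk hk hn (fun a => gX_lipk hk a) (fun a ha => gX_swap hk ha)
        (fun a ha => (gX_le hk a).trans (by omega))
        (fun a ha => (g_big_ge hk ha).2.1) i).2
    · rw [DU_inr, DU_inr]
      exact (Fstepk hk hn (fun a => gX_lipk hk a) (fun a ha => gX_swap hk ha)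
        (fun a ha => (gX_le hk a).trans (by omega))
        (fun a ha => (g_big_ge hk ha).2.1) j).1

lemma lipV (hk : 3 ≤ k) (hn : k*(k+2) ≤ n) :
    ∀ x y, (genPetersen n k).Adj x y → DV n k x ≤ DV n k y + 1 := by
  intro x y h
  rw [genPetersen, SimpleGraph.fromRel_adj] at h
  obtain ⟨hne, hrel⟩ := h
  rcases x with i|i <;> rcases y with j|j
  · have hrel' : j = i + 1 ∨ i = j + 1 := hrel
    rcases hrel' with rfl | rfl
    · rw [DV_inl, DV_inl]
      exact (Fstep1 (fun a => gX_lip1 hk a) i).2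
    · rw [DV_inl, DV_inl]
      exact (Fstep1 (fun a => gX_lip1 hk a) j).1
  · have hrel' : i = j ∨ False := hrel
    have hij : i = j := by tauto
    subst hij
    rw [DV_inl, DV_inr]
    exact (Fspoke (fun a => ⟨(gXV hk a).2, (gXV hk a).1⟩) i).1
  · have hrel' : False ∨ j = i := hrel
    have hij : j = i := by tauto
    subst hij
    rw [DV_inl, DV_inr]
    exact (Fspoke (fun a => ⟨(gXV hk a).2, (gXV hk a).1⟩) j).2
  · have hrel' : j = i + (k:ZMod n) ∨ i = j + (k:ZMod n) := hrel
    rcases hrel' with rfl | rfl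
    · rw [DV_inr, DV_inr]
      exact (Fstepk hk hn (fun a => gV_lipk hk a) (fun a ha => gV_swap hk ha)
        (fun a ha => (gV_le hk a).trans (by omega))
        (fun a ha => (g_big_ge hk ha).2.2) i).2
    · rw [DV_inr, DV_inr]
      exact (Fstepk hk hn (fun a => gV_lipk hk a) (fun a ha => gV_swap hk ha)
        (fun a ha => (gV_le hk a).trans (by omega))
        (fun a ha => (g_big_ge hk ha).2.2) j).1

end lip

section desc
variable [NeZero n]
open Sum

lemma val_sub_one {i : ZMod n} (h1 : 1 ≤ i.val) : (i - 1).val = i.val - 1 := by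
  have h2 := val_sub_nat (n:=n) i (c:=1) (by have := ZMod.val_lt i; omega)
  rw [Nat.cast_one] at h2
  rw [h2, mod_sub_lt (ZMod.val_lt i) (by have := ZMod.val_lt i; omega) h1]

lemma adj_outer' (hk : 3 ≤ k) (hn : k*(k+2) ≤ n) (i : ZMod n) :
    (genPetersen n k).Adj (inl i) (inl (i - 1)) := by
  have := (adj_outer hk hn (i - 1)).symm
  simpa using this

lemma adj_inner' (hk : 3 ≤ k) (hn : k*(k+2) ≤ n) (i : ZMod n) :
    (genPetersen n k).Adj (inr i) (inr (i - (k : ZMod n))) := by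
  have := (adj_inner hk hn (i - (k:ZMod n))).symm
  simpa using this

lemma hdescU (hk : 3 ≤ k) (hn : k*(k+2) ≤ n) :
    ∀ x, DU n k x ≠ 0 → ∃ y, (genPetersen n k).Adj x y ∧ DU n k y < DU n k x := by
  have hkn := k_lt_n hk hn
  have hnb := n_big hk hn
  intro x hx
  rcases x with i | i
  · have halt := ZMod.val_lt i
    have ha1 : 1 ≤ i.val := by
      by_contra h
      have h0 : i.val = 0 := by omega
      apply hx
      rw [DU_inl, h0, gU_zero hk]
      simp
    have hvm1 : (i - 1).val = i.val - 1 := val_sub_one ha1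
    have hvp1 : (i + 1).val = (i.val + 1) % n := by
      have := val_add_nat i 1; simpa using this
    rcases le_or_gt (gU k i.val) (gU k (n - i.val)) with hside | hside
    · have hF : DU n k (inl i) = gU k i.val := by rw [DU_inl]; omega
      rcases descU hk ha1 with h | h | h
      · refine ⟨inl (i - 1), adj_outer' hk hn i, ?_⟩
        rw [DU_inl, hF, hvm1]
        have := min_le_left (gU k (i.val - 1)) (gU k (n - (i.val - 1)))
        omega
      · refine ⟨inl (i + 1), adj_outer hk hn i, ?_⟩
        rw [DU_inl, hF, hvp1]
        by_cases hw : i.val + 1 = n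
        · rw [hw, Nat.mod_self, gU_zero hk]
          have hpos : 0 < gU k i.val := by
            rcases Nat.eq_zero_or_pos (gU k i.val) with h'|h'
            · rw [(gU_eq_zero hk _).1 h'] at ha1; omega
            · exact h'
          omega
        · rw [Nat.mod_eq_of_lt (by omega)]
          have := min_le_left (gU k (i.val + 1)) (gU k (n - (i.val + 1)))
          omega
      · refine ⟨inr i, adj_spoke i, ?_⟩
        rw [DU_inr, hF]
        have := min_le_left (gX k i.val) (gX k (n - i.val))
        omega
    · have hb1 : 1 ≤ n - i.val := by omega
      have hF : DU n k (inl i) = gU k (n - i.val) := by rw [DU_inl]; omega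
      rcases descU hk hb1 with h | h | h
      · refine ⟨inl (i + 1), adj_outer hk hn i, ?_⟩
        rw [DU_inl, hF, hvp1]
        by_cases hw : i.val + 1 = n
        · rw [hw, Nat.mod_self, gU_zero hk]
          have hpos : 0 < gU k (n - i.val) := by
            rcases Nat.eq_zero_or_pos (gU k (n - i.val)) with h'|h'
            · have := (gU_eq_zero hk _).1 h'; omega
            · exact h'
          omega
        · rw [Nat.mod_eq_of_lt (by omega)]
          have e : n - (i.val + 1) = (n - i.val) - 1 := by omega
          rw [e]
          have := min_le_right (gU k (i.val + 1)) (gU k (n - i.val - 1))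
          omega
      · refine ⟨inl (i - 1), adj_outer' hk hn i, ?_⟩
        rw [DU_inl, hF, hvm1]
        have e : n - (i.val - 1) = (n - i.val) + 1 := by omega
        rw [e]
        have := min_le_right (gU k (i.val - 1)) (gU k (n - i.val + 1))
        omega
      · refine ⟨inr i, adj_spoke i, ?_⟩
        rw [DU_inr, hF]
        have := min_le_right (gX k i.val) (gX k (n - i.val))
        omega
  · by_cases hi0 : i = 0
    · subst hi0
      refine ⟨inl 0, (adj_spoke 0).symm, ?_⟩
      rw [DU_inl, DU_inr, ZMod.val_zero, gU_zero hk, gX_zero hk]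
      have h1 := gX_pos hk (n - 0)
      omega
    · have halt := ZMod.val_lt i
      have ha1 : 1 ≤ i.val := by
        rcases Nat.eq_zero_or_pos i.val with h'|h'
        · exact absurd ((ZMod.val_eq_zero i).1 h') hi0
        · exact h'
      have hvpk : (i + (k:ZMod n)).val = (i.val + k) % n := val_add_nat i k
      have hvmk : (i - (k:ZMod n)).val = (i.val + (n - k)) % n :=
        val_sub_nat i (by omega)
      rcases le_or_gt (gX k i.val) (gX k (n - i.val)) with hside | hside
      · have hF : DU n k (inr i) = gX k i.val := by rw [DU_inr]; omega
        rcases descXU hk ha1 with h | ⟨hka, h⟩ | ⟨hka, h⟩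
        · refine ⟨inl i, (adj_spoke i).symm, ?_⟩
          rw [DU_inl, hF]
          have := min_le_left (gU k i.val) (gU k (n - i.val))
          omega
        · refine ⟨inr (i - (k:ZMod n)), adj_inner' hk hn i, ?_⟩
          rw [DU_inr, hF, hvmk, mod_sub_lt halt (by omega) hka]
          have := min_le_left (gX k (i.val - k)) (gX k (n - (i.val - k)))
          omega
        · refine ⟨inr (i - (k:ZMod n)), adj_inner' hk hn i, ?_⟩
          rw [DU_inr, hF, hvmk, mod_sub_ge halt (by omega) hka]
          have e : n - (i.val + n - k) = k - i.val := by omega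
          rw [e]
          have := min_le_right (gX k (i.val + n - k)) (gX k (k - i.val))
          omega
      · have hb1 : 1 ≤ n - i.val := by omega
        have hF : DU n k (inr i) = gX k (n - i.val) := by rw [DU_inr]; omega
        rcases descXU hk hb1 with h | ⟨hka, h⟩ | ⟨hka, h⟩
        · refine ⟨inl i, (adj_spoke i).symm, ?_⟩
          rw [DU_inl, hF]
          have := min_le_right (gU k i.val) (gU k (n - i.val))
          omega
        · -- k ≤ n - i.val : neighbor i + k, components (a+k, b-k)
          refine ⟨inr (i + (k:ZMod n)), adj_inner hk hn i, ?_⟩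
          rw [DU_inr, hF, hvpk]
          by_cases hw : i.val + k = n
          · rw [hw, Nat.mod_self]
            have e : n - i.val - k = 0 := by omega
            rw [e] at h
            have := min_le_left (gX k 0) (gX k (n - 0))
            omega
          · rw [Nat.mod_eq_of_lt (by omega)]
            have e : n - (i.val + k) = n - i.val - k := by omega
            rw [e]
            have := min_le_right (gX k (i.val + k)) (gX k (n - i.val - k))
            omega
        · -- n - i.val < k : wrap, neighbor i + k, val = i.val + k - n = k - b
          refine ⟨inr (i + (k:ZMod n)), adj_inner hk hn i, ?_⟩
          rw [DU_inr, hF, hvpk]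
          have hval : (i.val + k) % n = k - (n - i.val) := by
            rw [Nat.mod_eq_sub_mod (by omega), Nat.mod_eq_of_lt (by omega)]
            omega
          rw [hval]
          have := min_le_left (gX k (k - (n - i.val))) (gX k (n - (k - (n - i.val))))
          omega

lemma hdescV (hk : 3 ≤ k) (hn : k*(k+2) ≤ n) :
    ∀ x, DV n k x ≠ 0 → ∃ y, (genPetersen n k).Adj x y ∧ DV n k y < DV n k x := by
  have hkn := k_lt_n hk hn
  have hnb := n_big hk hn
  intro x hx
  rcases x with i | i
  · -- outer vertex, target v0
    by_cases hi0 : i = 0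
    · subst hi0
      refine ⟨inr 0, adj_spoke 0, ?_⟩
      rw [DV_inl, DV_inr, ZMod.val_zero, gV_zero hk, gX_zero hk]
      have h1 := gX_pos hk (n - 0)
      omega
    · have halt := ZMod.val_lt i
      have ha1 : 1 ≤ i.val := by
        rcases Nat.eq_zero_or_pos i.val with h'|h'
        · exact absurd ((ZMod.val_eq_zero i).1 h') hi0
        · exact h'
      have hvm1 : (i - 1).val = i.val - 1 := val_sub_one ha1
      have hvp1 : (i + 1).val = (i.val + 1) % n := by
        have := val_add_nat i 1; simpa using this
      rcases le_or_gt (gX k i.val) (gX k (n - i.val)) with hside | hside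
      · have hF : DV n k (inl i) = gX k i.val := by rw [DV_inl]; omega
        rcases descXV hk ha1 with h | h | h
        · refine ⟨inl (i - 1), adj_outer' hk hn i, ?_⟩
          rw [DV_inl, hF, hvm1]
          have := min_le_left (gX k (i.val - 1)) (gX k (n - (i.val - 1)))
          omega
        · refine ⟨inl (i + 1), adj_outer hk hn i, ?_⟩
          rw [DV_inl, hF, hvp1]
          by_cases hw : i.val + 1 = n
          · rw [hw, Nat.mod_self, gX_zero hk]
            -- DV (inl 0) relevant value: min (gX 0) (gX n) = min 1 (gX n)
            -- need 1 < gX i.val: since gX (i.val+1) < gX i.val and gX ≥ 1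
            have h1 := gX_pos hk (i.val + 1)
            omega
          · rw [Nat.mod_eq_of_lt (by omega)]
            have := min_le_left (gX k (i.val + 1)) (gX k (n - (i.val + 1)))
            omega
        · refine ⟨inr i, adj_spoke i, ?_⟩
          rw [DV_inr, hF]
          have := min_le_left (gV k i.val) (gV k (n - i.val))
          omega
      · have hb1 : 1 ≤ n - i.val := by omega
        have hF : DV n k (inl i) = gX k (n - i.val) := by rw [DV_inl]; omega
        rcases descXV hk hb1 with h | h | h
        · refine ⟨inl (i + 1), adj_outer hk hn i, ?_⟩
          rw [DV_inl, hF, hvp1]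
          by_cases hw : i.val + 1 = n
          · rw [hw, Nat.mod_self, gX_zero hk]
            have h1 := gX_pos hk (n - i.val - 1)
            omega
          · rw [Nat.mod_eq_of_lt (by omega)]
            have e : n - (i.val + 1) = (n - i.val) - 1 := by omega
            rw [e]
            have := min_le_right (gX k (i.val + 1)) (gX k (n - i.val - 1))
            omega
        · refine ⟨inl (i - 1), adj_outer' hk hn i, ?_⟩
          rw [DV_inl, hF, hvm1]
          have e : n - (i.val - 1) = (n - i.val) + 1 := by omega
          rw [e]
          have := min_le_right (gX k (i.val - 1)) (gX k (n - i.val + 1))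
          omega
        · refine ⟨inr i, adj_spoke i, ?_⟩
          rw [DV_inr, hF]
          have := min_le_right (gV k i.val) (gV k (n - i.val))
          omega
  · -- inner vertex, target v0
    have halt := ZMod.val_lt i
    have ha1 : 1 ≤ i.val := by
      by_contra h'
      have h0 : i.val = 0 := by omega
      apply hx
      rw [DV_inr, h0, gV_zero hk]
      simp
    have hvpk : (i + (k:ZMod n)).val = (i.val + k) % n := val_add_nat i k
    have hvmk : (i - (k:ZMod n)).val = (i.val + (n - k)) % n :=
      val_sub_nat i (by omega)
    rcases le_or_gt (gV k i.val) (gV k (n - i.val)) with hside | hside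
    · have hF : DV n k (inr i) = gV k i.val := by rw [DV_inr]; omega
      rcases descV hk ha1 with h | ⟨hmod, hka, h⟩
      · refine ⟨inl i, (adj_spoke i).symm, ?_⟩
        rw [DV_inl, hF]
        have := min_le_left (gX k i.val) (gX k (n - i.val))
        omega
      · refine ⟨inr (i - (k:ZMod n)), adj_inner' hk hn i, ?_⟩
        rw [DV_inr, hF, hvmk, mod_sub_lt halt (by omega) hka]
        have := min_le_left (gV k (i.val - k)) (gV k (n - (i.val - k)))
        omega
    · have hb1 : 1 ≤ n - i.val := by omega
      have hF : DV n k (inr i) = gV k (n - i.val) := by rw [DV_inr]; omega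
      rcases descV hk hb1 with h | ⟨hmod, hka, h⟩
      · refine ⟨inl i, (adj_spoke i).symm, ?_⟩
        rw [DV_inl, hF]
        have := min_le_right (gX k i.val) (gX k (n - i.val))
        omega
      · refine ⟨inr (i + (k:ZMod n)), adj_inner hk hn i, ?_⟩
        rw [DV_inr, hF, hvpk]
        by_cases hw : i.val + k = n
        · rw [hw, Nat.mod_self]
          have e : n - i.val - k = 0 := by omega
          rw [e] at h
          have := min_le_left (gV k 0) (gV k (n - 0))
          omega
        · rw [Nat.mod_eq_of_lt (by omega)]
          have e : n - (i.val + k) = n - i.val - k := by omega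
          rw [e]
          have := min_le_right (gV k (i.val + k)) (gV k (n - i.val - k))
          omega

lemma DU_zero_iff (hk : 3 ≤ k) (hn : k*(k+2) ≤ n) (x : ZMod n ⊕ ZMod n) :
    DU n k x = 0 ↔ x = inl 0 := by
  have hkn := k_lt_n hk hn
  rcases x with i | i
  · rw [DU_inl]
    have halt := ZMod.val_lt i
    constructor
    · intro h
      have h1 : gU k i.val = 0 ∨ gU k (n - i.val) = 0 := by omega
      rcases h1 with h1 | h1
      · have := (gU_eq_zero hk _).1 h1
        have : i = 0 := (ZMod.val_eq_zero i).1 this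
        rw [this]
      · have := (gU_eq_zero hk _).1 h1
        omega
    · rintro h
      have h0 : i = 0 := by simpa using h
      subst h0
      rw [ZMod.val_zero, gU_zero hk]
      simp
  · constructor
    · intro h
      rw [DU_inr] at h
      have h1 := gX_pos hk i.val
      have h2 := gX_pos hk (n - i.val)
      omega
    · intro h; simp at h

lemma DV_zero_iff (hk : 3 ≤ k) (hn : k*(k+2) ≤ n) (x : ZMod n ⊕ ZMod n) :
    DV n k x = 0 ↔ x = inr 0 := by
  have hkn := k_lt_n hk hn
  rcases x with i | i
  · constructor
    · intro h
      rw [DV_inl] at h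
      have h1 := gX_pos hk i.val
      have h2 := gX_pos hk (n - i.val)
      omega
    · intro h; simp at h
  · rw [DV_inr]
    have halt := ZMod.val_lt i
    constructor
    · intro h
      have h1 : gV k i.val = 0 ∨ gV k (n - i.val) = 0 := by omega
      rcases h1 with h1 | h1
      · have := (gV_eq_zero hk _).1 h1
        have : i = 0 := (ZMod.val_eq_zero i).1 this
        rw [this]
      · have := (gV_eq_zero hk _).1 h1
        omega
    · rintro h
      have h0 : i = 0 := by simpa using h
      subst h0
      rw [ZMod.val_zero, gV_zero hk]
      simp

lemma dist_eq_DU (hk : 3 ≤ k) (hn : k*(k+2) ≤ n) (x : ZMod n ⊕ ZMod n) :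
    (genPetersen n k).dist x (inl 0) = DU n k x :=
  dist_eq_of_potential _ _ _ (DU_zero_iff hk hn) (lipU hk hn)
    (hdescU hk hn) x

lemma dist_eq_DV (hk : 3 ≤ k) (hn : k*(k+2) ≤ n) (x : ZMod n ⊕ ZMod n) :
    (genPetersen n k).dist x (inr 0) = DV n k x :=
  dist_eq_of_potential _ _ _ (DV_zero_iff hk hn) (lipV hk hn)
    (hdescV hk hn) x

end desc

section compare
variable [NeZero n]
open Sum

-- pure helper lemmas for the outer comparison
lemma outer_small_helper (hk : 3 ≤ k) (hn : k*(k+2) ≤ n) {a b : ℕ}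
    (hab : a + b = n) (hle : a ≤ b) (h : 2*a ≤ k+1) :
    min (gU k a) (gU k b) < min (gX k a) (gX k b) := by
  have hnb := n_big hk hn
  have hbig : k*(k+1) ≤ b := by omega
  obtain ⟨h1, h2⟩ := cmp_outer_small hk h
  obtain ⟨h3, h4, h5⟩ := g_big_ge hk hbig
  omega

lemma outer_mid_helper (hk : 3 ≤ k) (hn : k*(k+2) ≤ n) {a b : ℕ}
    (hab : a + b = n) (hle : a ≤ b) (h : 2*a = k+2) :
    min (gU k a) (gU k b) = min (gX k a) (gX k b) := by
  have hnb := n_big hk hn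
  have hbig : k*(k+1) ≤ b := by omega
  obtain ⟨h1, h2⟩ := cmp_outer_mid hk h
  obtain ⟨h3, h4, h5⟩ := g_big_ge hk hbig
  omega

lemma outer_big_helper (hk : 3 ≤ k) {a b : ℕ}
    (ha : k+3 ≤ 2*a) (hb : k+3 ≤ 2*b) :
    min (gX k a) (gX k b) < min (gU k a) (gU k b) := by
  have h1 := cmp_outer_big hk ha
  have h2 := cmp_outer_big hk hb
  omega

-- vertex-level trichotomy for outer vertices
lemma cmp_inl_small (hk : 3 ≤ k) (hn : k*(k+2) ≤ n) {i : ZMod n}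
    (h : 2 * min i.val (n - i.val) ≤ k + 1) :
    DU n k (inl i) < DV n k (inl i) := by
  rw [DU_inl, DV_inl]
  have halt := ZMod.val_lt i
  rcases le_total i.val (n - i.val) with hle | hle
  · have := outer_small_helper hk hn (by omega) hle (by omega)
    omega
  · have := outer_small_helper hk hn (a := n - i.val) (b := i.val) (by omega) hle (by omega)
    omega

lemma cmp_inl_mid (hk : 3 ≤ k) (hn : k*(k+2) ≤ n) {i : ZMod n}
    (h : 2 * min i.val (n - i.val) = k + 2) :
    DU n k (inl i) = DV n k (inl i) := by
  rw [DU_inl, DV_inl]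
  have halt := ZMod.val_lt i
  rcases le_total i.val (n - i.val) with hle | hle
  · have := outer_mid_helper hk hn (by omega) hle (by omega)
    omega
  · have := outer_mid_helper hk hn (a := n - i.val) (b := i.val) (by omega) hle (by omega)
    omega

lemma cmp_inl_big (hk : 3 ≤ k) {i : ZMod n}
    (h : k + 3 ≤ 2 * min i.val (n - i.val)) :
    DV n k (inl i) < DU n k (inl i) := by
  rw [DU_inl, DV_inl]
  exact outer_big_helper hk (by omega) (by omega)

-- inner vertices
lemma cmp_inr_mult (hk : 3 ≤ k) (hn : k*(k+2) ≤ n) (hdvd : k ∣ n) {i : ZMod n}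
    (h : i.val % k = 0) :
    DV n k (inr i) < DU n k (inr i) := by
  rw [DU_inr, DV_inr]
  have halt := ZMod.val_lt i
  have hb : (n - i.val) % k = 0 := by
    have h1 : k ∣ i.val := Nat.dvd_of_mod_eq_zero h
    have h2 : k ∣ (n - i.val) := Nat.dvd_sub hdvd h1
    obtain ⟨c, hc⟩ := h2
    rw [hc]
    exact Nat.mul_mod_right k c
  obtain ⟨e1, e2⟩ := cmp_inner0 hk h
  obtain ⟨e3, e4⟩ := cmp_inner0 hk hb
  rw [e1, e2, e3, e4]
  omega

lemma cmp_inr_nonmult (hk : 3 ≤ k) (hn : k*(k+2) ≤ n) (hdvd : k ∣ n) {i : ZMod n}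
    (h : i.val % k ≠ 0) :
    DU n k (inr i) < DV n k (inr i) := by
  rw [DU_inr, DV_inr]
  have halt := ZMod.val_lt i
  have hb : (n - i.val) % k ≠ 0 := by
    intro hc
    apply h
    have h1 : k ∣ (n - i.val) := Nat.dvd_of_mod_eq_zero hc
    have h2 : k ∣ i.val := by
      have h3 : i.val = n - (n - i.val) := by omega
      rw [h3]
      exact Nat.dvd_sub hdvd h1
    obtain ⟨c, hc⟩ := h2
    rw [hc]
    exact Nat.mul_mod_right k c
  have e1 := cmp_inner1 hk h
  have e2 := cmp_inner1 hk hb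
  omega

end compare

section count
variable [NeZero n]
open Sum Finset

lemma card_filter_val (P : ℕ → Prop) [DecidablePred P] :
    (Finset.univ.filter fun i : ZMod n => P i.val).card
      = ((Finset.range n).filter P).card := by
  apply Finset.card_bij (fun i _ => i.val)
  · intro i hi
    simp only [Finset.mem_filter, Finset.mem_range]
    exact ⟨ZMod.val_lt i, (Finset.mem_filter.1 hi).2⟩
  · intro i _ j _ hij
    exact ZMod.val_injective n hij
  · intro a ha
    obtain ⟨ha1, ha2⟩ := Finset.mem_filter.1 ha
    rw [Finset.mem_range] at ha1
    refine ⟨(a : ZMod n), ?_, ?_⟩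
    · simp only [Finset.mem_filter, Finset.mem_univ, true_and]
      rw [val_natCast_lt ha1]
      exact ha2
    · rw [val_natCast_lt ha1]

lemma card_mod_zero (hk0 : 0 < k) (hdvd : k ∣ n) :
    ((Finset.range n).filter fun a => a % k = 0).card = n / k := by
  obtain ⟨m, rfl⟩ := hdvd
  have himg : (Finset.range (k*m)).filter (fun a => a % k = 0)
      = (Finset.range m).image (fun j => k*j) := by
    ext a
    simp only [Finset.mem_filter, Finset.mem_range, Finset.mem_image]
    constructor
    · rintro ⟨h1, h2⟩
      refine ⟨a / k, ?_, ?_⟩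
      · rw [Nat.div_lt_iff_lt_mul hk0]
        have hc : k*m = m*k := Nat.mul_comm k m
        omega
      · exact Nat.mul_div_cancel' (Nat.dvd_of_mod_eq_zero h2)
    · rintro ⟨j, hj, rfl⟩
      exact ⟨by exact (Nat.mul_lt_mul_left hk0).2 hj, Nat.mul_mod_right k j⟩
  rw [himg, Finset.card_image_of_injective _ (fun x y h => by
    exact Nat.eq_of_mul_eq_mul_left hk0 h), Finset.card_range,
    Nat.mul_div_cancel_left m hk0]

lemma card_ring_close {s : ℕ} (h1 : 2*s + 1 ≤ n) :
    ((Finset.range n).filter fun a => min a (n-a) ≤ s).card = 2*s + 1 := by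
  have hset : (Finset.range n).filter (fun a => min a (n-a) ≤ s)
      = Finset.range (s+1) ∪ Finset.Ico (n-s) n := by
    ext a
    simp only [Finset.mem_filter, Finset.mem_range, Finset.mem_union, Finset.mem_Ico]
    omega
  rw [hset, Finset.card_union_of_disjoint]
  · rw [Finset.card_range, Nat.card_Ico]
    omega
  · rw [Finset.disjoint_left]
    intro a ha hb
    rw [Finset.mem_range] at ha
    rw [Finset.mem_Ico] at hb
    omega

lemma card_S (hk : 3 ≤ k) (hn : k*(k+2) ≤ n) (hdvd : k ∣ n) :
    (Finset.univ.filter fun w : ZMod n ⊕ ZMod n => DV n k w < DU n k w).card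
      = (n - (2*((k+2)/2)+1)) + n/k := by
  have hkn := k_lt_n hk hn
  set S := Finset.univ.filter fun w : ZMod n ⊕ ZMod n => DV n k w < DU n k w with hSdef
  have hL : S.toLeft = Finset.univ.filter
      (fun i : ZMod n => ¬ (min i.val (n - i.val) ≤ (k+2)/2)) := by
    ext i
    simp only [Finset.mem_toLeft, hSdef, Finset.mem_filter, Finset.mem_univ, true_and]
    constructor
    · intro h
      intro hc
      rcases Nat.lt_or_ge (2 * min i.val (n - i.val)) (k+2) with h2 | h2
      · have := cmp_inl_small hk hn (i := i) (by omega)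
        omega
      · have h3 : 2 * min i.val (n - i.val) = k + 2 := by omega
        have := cmp_inl_mid hk hn h3
        omega
    · intro h
      exact cmp_inl_big hk (by omega)
  have hR : S.toRight = Finset.univ.filter (fun i : ZMod n => i.val % k = 0) := by
    ext i
    simp only [Finset.mem_toRight, hSdef, Finset.mem_filter, Finset.mem_univ, true_and]
    constructor
    · intro h
      by_contra hc
      have := cmp_inr_nonmult hk hn hdvd hc
      omega
    · intro h
      exact cmp_inr_mult hk hn hdvd h
  rw [← Finset.card_toLeft_add_card_toRight (u := S), hL, hR]
  congr 1
  · -- complement count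
    have hcompl := Finset.card_filter_add_card_filter_not
      (s := (Finset.univ : Finset (ZMod n)))
      (p := fun i : ZMod n => min i.val (n - i.val) ≤ (k+2)/2)
    have hc1 : (Finset.univ.filter fun i : ZMod n => min i.val (n - i.val) ≤ (k+2)/2).card
        = 2*((k+2)/2)+1 := by
      rw [card_filter_val (fun a => min a (n - a) ≤ (k+2)/2)]
      exact card_ring_close (by omega)
    have hcard : (Finset.univ : Finset (ZMod n)).card = n := by
      rw [Finset.card_univ, ZMod.card]
    omega
  · rw [card_filter_val (fun a => a % k = 0)]
    exact card_mod_zero (by omega) hdvd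

lemma card_T (hk : 3 ≤ k) (hn : k*(k+2) ≤ n) (hdvd : k ∣ n) :
    (Finset.univ.filter fun w : ZMod n ⊕ ZMod n => DU n k w < DV n k w).card
      = (2*((k+1)/2)+1) + (n - n/k) := by
  have hkn := k_lt_n hk hn
  set T := Finset.univ.filter fun w : ZMod n ⊕ ZMod n => DU n k w < DV n k w with hTdef
  have hL : T.toLeft = Finset.univ.filter
      (fun i : ZMod n => min i.val (n - i.val) ≤ (k+1)/2) := by
    ext i
    simp only [Finset.mem_toLeft, hTdef, Finset.mem_filter, Finset.mem_univ, true_and]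
    constructor
    · intro h
      by_contra hc
      rcases Nat.lt_or_ge (2 * min i.val (n - i.val)) (k+3) with h2 | h2
      · have h3 : 2 * min i.val (n - i.val) = k + 2 := by omega
        have := cmp_inl_mid hk hn h3
        omega
      · have := cmp_inl_big hk (i := i) (by omega)
        omega
    · intro h
      exact cmp_inl_small hk hn (by omega)
  have hR : T.toRight = Finset.univ.filter (fun i : ZMod n => ¬ (i.val % k = 0)) := by
    ext i
    simp only [Finset.mem_toRight, hTdef, Finset.mem_filter, Finset.mem_univ, true_and]
    constructor
    · intro h
      intro hc
      have := cmp_inr_mult hk hn hdvd hc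
      omega
    · intro h
      exact cmp_inr_nonmult hk hn hdvd h
  rw [← Finset.card_toLeft_add_card_toRight (u := T), hL, hR]
  congr 1
  · rw [card_filter_val (fun a => min a (n - a) ≤ (k+1)/2)]
    exact card_ring_close (by omega)
  · have hcompl := Finset.card_filter_add_card_filter_not
      (s := (Finset.univ : Finset (ZMod n)))
      (p := fun i : ZMod n => i.val % k = 0)
    have hc1 : (Finset.univ.filter fun i : ZMod n => i.val % k = 0).card = n / k := by
      rw [card_filter_val (fun a => a % k = 0)]
      exact card_mod_zero (by omega) hdvd
    have hcard : (Finset.univ : Finset (ZMod n)).card = n := by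
      rw [Finset.card_univ, ZMod.card]
    have hdle : n / k ≤ n := Nat.div_le_self n k
    omega

end count

end graph

theorem stmt_13 (n k : ℕ) (hk : 3 ≤ k) (hn : k * (k + 2) ≤ n) (hdvd : k ∣ n) :
    (((closerSet (genPetersen n k) (Sum.inr 0) (Sum.inl 0)).ncard : ℤ)
        - ((closerSet (genPetersen n k) (Sum.inl 0) (Sum.inr 0)).ncard : ℤ)
      = 2 * ((n / k : ℕ) : ℤ) - 2 * k - 4) ∧
    (k * (k + 2) < n →
      (closerSet (genPetersen n k) (Sum.inl 0) (Sum.inr 0)).ncard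
        < (closerSet (genPetersen n k) (Sum.inr 0) (Sum.inl 0)).ncard) ∧
    (n = k * (k + 2) →
      (closerSet (genPetersen n k) (Sum.inr 0) (Sum.inl 0)).ncard
        = (closerSet (genPetersen n k) (Sum.inl 0) (Sum.inr 0)).ncard) := by
  haveI : NeZero n := ⟨by have := n_pos hk hn; omega⟩
  have hkn := k_lt_n hk hn
  classical
  have hS : closerSet (genPetersen n k) (Sum.inr 0) (Sum.inl 0)
      = ↑(Finset.univ.filter fun w : ZMod n ⊕ ZMod n => DV n k w < DU n k w) := by
    ext w
    simp only [closerSet, Set.mem_setOf_eq, Finset.coe_filter, Finset.mem_univ,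
      true_and, Set.mem_setOf_eq]
    rw [dist_eq_DU hk hn w, dist_eq_DV hk hn w]
  have hT : closerSet (genPetersen n k) (Sum.inl 0) (Sum.inr 0)
      = ↑(Finset.univ.filter fun w : ZMod n ⊕ ZMod n => DU n k w < DV n k w) := by
    ext w
    simp only [closerSet, Set.mem_setOf_eq, Finset.coe_filter, Finset.mem_univ,
      true_and, Set.mem_setOf_eq]
    rw [dist_eq_DU hk hn w, dist_eq_DV hk hn w]
  have h1 : (closerSet (genPetersen n k) (Sum.inr 0) (Sum.inl 0)).ncard
      = n - (2*((k+2)/2)+1) + n/k := by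
    rw [hS, Set.ncard_coe_finset, card_S hk hn hdvd]
  have h2 : (closerSet (genPetersen n k) (Sum.inl 0) (Sum.inr 0)).ncard
      = 2*((k+1)/2)+1 + (n - n/k) := by
    rw [hT, Set.ncard_coe_finset, card_T hk hn hdvd]
  have hm1 : k * (n/k) = n := Nat.mul_div_cancel' hdvd
  have hm2 : k + 2 ≤ n / k := by
    by_contra hc
    push_neg at hc
    have h3 : k * (n/k) ≤ k*(k+1) := Nat.mul_le_mul_left k (by omega)
    have h4 : k*(k+1) + k = k*(k+2) := by ring
    omega
  have hmn : n / k ≤ n := Nat.div_le_self n k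
  refine ⟨?_, ?_, ?_⟩
  · rw [h1, h2]
    set m := n / k with hmdef
    omega
  · intro hlt
    have hm3 : k + 2 < n / k := by
      by_contra hc
      push_neg at hc
      have hm : n / k = k + 2 := by omega
      rw [hm] at hm1
      omega
    rw [h1, h2]
    set m := n / k with hmdef
    omega
  · intro heq
    have hm4 : n / k = k + 2 := by
      have h5 : k * (n/k) = k * (k+2) := by rw [hm1, heq]
      exact Nat.eq_of_mul_eq_mul_left (by omega) h5
    rw [h1, h2]
    set m := n / k with hmdef
    omega
end

section
/- Let k ≥ 4 be even, n > k(k+2), and suppose k does not divide n. Then in GP(n,k), the vertices v_{ik} and v_{-ik} for 0 ≤ i ≤ ⌊n/(2k)⌋ all lie in W_{v_0 u_0}, and consequently 2|W_{v_0 u_0}| + |_{u_0}W_{v_0}| ≥ 2n + 2 > 2n, so GP(n,k) is not distance-balanced. -/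
/-!
Record a walk to `u_0` by the net numbers `a` and `b` of its inner and outer steps: its start
has index `a k + b`, and its length is at least `|a| + |b|`, plus `1` if it starts at an inner
vertex, plus `2` if it starts at an outer vertex and enters the inner cycle. Hence `v_{ak}` with
`2 |a| k ≤ n` is closer to `v_0` than to `u_0`, and so is an outer vertex `u_j` at cyclic
distance `c` from `u_0` with `2c ≥ k + 3`, since `v_0` is within `max (k + 2 - c) (c - 2)` of
it. With `k = 2K`, this puts the `k + 3` vertices `v_{ak}`, `|a| ≤ K + 1`, and at least
`n - k - 3` outer vertices into `W_{v_0 u_0}`, while `W_{u_0 v_0}` has at most `k + 1` outer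
vertices and none of those `k + 3` inner ones; so `|W_{v_0 u_0}| ≥ |W_{u_0 v_0}| + 2`.
-/

open SimpleGraph

namespace Int

variable {k : ℕ}

lemma natAbs_mul_add_le (hk : 0 < k) (a b : ℤ) :
    (a * k + b).natAbs ≤ (a.natAbs + b.natAbs) * k := by
  have hb : b.natAbs ≤ b.natAbs * k := Nat.le_mul_of_pos_right _ hk
  calc (a * k + b).natAbs ≤ a.natAbs * k + b.natAbs := by
        simpa [Int.natAbs_mul] using Int.natAbs_add_le (a * k) b
    _ ≤ (a.natAbs + b.natAbs) * k := by rw [Nat.add_mul]; omega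

lemma exists_mul_add_eq_natAbs_add_le (hk : 4 ≤ k) (z : ℤ) :
    ∃ a b : ℤ, a * k + b = z ∧
      a.natAbs + b.natAbs + 1 ≤ max (k + 2 - z.natAbs) (z.natAbs - 2) := by
  have hnat (c : ℕ) : ∃ a b : ℤ, a * k + b = c ∧
      a.natAbs + b.natAbs + 1 ≤ max (k + 2 - c) (c - 2) := by
    by_cases hc : c ≤ k
    · exact ⟨1, c - k, by ring, by omega⟩
    · have hdiv := Nat.div_add_mod' c k
      have hq : c / k * 4 ≤ c / k * k := Nat.mul_le_mul_left _ hk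
      refine ⟨(c / k : ℕ), (c % k : ℕ), by exact_mod_cast hdiv, ?_⟩
      have : 1 ≤ c / k := (Nat.one_le_div_iff (by omega)).mpr (by omega)
      omega
  obtain ⟨a, b, hab, hle⟩ := hnat z.natAbs
  rcases Int.natAbs_eq z with hz | hz
  · exact ⟨a, b, by rw [hz, hab], hle⟩
  · exact ⟨-a, -b, by rw [hz, ← hab]; ring, by simpa using hle⟩

end Int

namespace ZMod

variable {n : ℕ}

lemma ncard_natAbs_valMinAbs_le (m : ℕ) :
    {j : ZMod n | j.valMinAbs.natAbs ≤ m}.ncard ≤ 2 * m + 1 := by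
  calc {j : ZMod n | j.valMinAbs.natAbs ≤ m}.ncard
      ≤ ((Finset.Icc (-m : ℤ) m).image ((↑) : ℤ → ZMod n) : Set (ZMod n)).ncard := by
        refine Set.ncard_le_ncard (fun j hj => ?_) (Finset.finite_toSet _)
        simp only [Set.mem_ofPred_eq, Finset.coe_image, Finset.coe_Icc] at hj ⊢
        exact ⟨j.valMinAbs, Set.mem_Icc.mpr (by omega), coe_valMinAbs j⟩
    _ ≤ 2 * m + 1 := by
        rw [Set.ncard_coe_finset]
        refine Finset.card_image_le.trans ?_
        simp only [Int.card_Icc]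
        omega

lemma injOn_intCast_mul {k m : ℕ} (hk : 0 < k) (hmk : 2 * m * k < n) :
    Set.InjOn (fun a : ℤ => (a * k : ZMod n)) (Set.Icc (-m) m) := by
  intro a₁ h₁ a₂ h₂ he
  rw [Set.mem_Icc] at h₁ h₂
  have hdvd : (n : ℤ) ∣ (a₁ - a₂) * k := by
    rw [← ZMod.intCast_zmod_eq_zero_iff_dvd]
    push_cast
    linear_combination he
  have hlt : |(a₁ - a₂) * k| < n := by
    rw [abs_mul, Nat.abs_cast]
    calc |a₁ - a₂| * k ≤ (2 * m : ℤ) * k := by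
          gcongr
          exact abs_sub_le_iff.mpr ⟨by omega, by omega⟩
      _ < n := by exact_mod_cast hmk
  have := Int.eq_zero_of_abs_lt_dvd hdvd hlt
  rcases mul_eq_zero.mp this with h | h <;> omega

end ZMod

lemma Set.ncard_eq_ncard_preimage_inl_add_ncard_preimage_inr {α β : Type*} [Finite α]
    [Finite β] (s : Set (α ⊕ β)) :
    s.ncard = (Sum.inl ⁻¹' s).ncard + (Sum.inr ⁻¹' s).ncard := by
  have hs : s = Sum.inl '' (Sum.inl ⁻¹' s) ∪ Sum.inr '' (Sum.inr ⁻¹' s) := by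
    ext (x | x) <;> simp
  conv_lhs => rw [hs]
  rw [Set.ncard_union_eq (Set.isCompl_range_inl_range_inr.disjoint.mono
      (Set.image_subset_range _ _) (Set.image_subset_range _ _)),
    Set.ncard_image_of_injective _ Sum.inl_injective,
    Set.ncard_image_of_injective _ Sum.inr_injective]

namespace SimpleGraph

variable {V : Type*} {G : SimpleGraph V} {u v : V}

lemma dist_le_of_edist_le {m : ℕ} (h : G.edist u v ≤ m) : G.dist u v ≤ m := by
  by_cases hr : G.Reachable u v
  · rw [← hr.coe_dist_eq_edist] at h
    exact_mod_cast h
  · rw [dist_eq_zero_of_not_reachable hr]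
    exact m.zero_le

lemma edist_fromRel_le_one {r : V → V → Prop} (h : r u v) : (fromRel r).edist u v ≤ 1 := by
  rw [edist_le_one_iff_adj_or_eq, fromRel_adj]
  by_cases huv : u = v
  · exact Or.inr huv
  · exact Or.inl ⟨huv, Or.inl h⟩

lemma edist_le_natAbs_of_edist_add_le_one {A : Type*} [AddGroup A] (f : A → V) (s : A)
    (hs : ∀ a, G.edist (f a) (f (a + s)) ≤ 1) (a : A) (z : ℤ) :
    G.edist (f a) (f (a + z • s)) ≤ z.natAbs := by
  have hnat : ∀ (a : A) (m : ℕ), G.edist (f a) (f (a + m • s)) ≤ m := by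
    intro a m
    induction m with
    | zero => simp
    | succ m ih =>
      calc G.edist (f a) (f (a + (m + 1) • s))
          ≤ G.edist (f a) (f (a + m • s)) + G.edist (f (a + m • s)) (f (a + m • s + s)) := by
            rw [succ_nsmul, ← add_assoc]; exact G.edist_triangle
        _ ≤ m + 1 := add_le_add ih (hs _)
        _ = (m + 1 : ℕ) := by push_cast; rfl
  obtain ⟨m, rfl | rfl⟩ := Int.eq_nat_or_neg z
  · simpa using hnat a m
  · rw [edist_comm]
    simpa [neg_smul, ← sub_eq_add_neg] using hnat (a - m • s) m

end SimpleGraph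

lemma ncard_closerSet_add_ncard_closerSet_add_ncard_eqDistSet {V : Type*} [Finite V]
    (G : SimpleGraph V) (x y : V) :
    (closerSet G x y).ncard + (closerSet G y x).ncard + (eqDistSet G x y).ncard = Nat.card V := by
  have hdisj : Disjoint (closerSet G x y) (eqDistSet G x y) :=
    Set.disjoint_left.mpr fun w (h₁ : _ < _) (h₂ : _ = _) => h₁.ne h₂
  have hcompl : closerSet G x y ∪ eqDistSet G x y = (closerSet G y x)ᶜ := by
    ext w
    simp only [closerSet, eqDistSet, Set.mem_union, Set.mem_ofPred_eq, Set.mem_compl_iff]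
    omega
  rw [add_right_comm, ← Set.ncard_union_eq hdisj, hcompl, Set.ncard_compl_add_ncard]

namespace genPetersen

variable {n k : ℕ}

lemma edist_inl_inl_add_le (i : ZMod n) (z : ℤ) :
    (genPetersen n k).edist (.inl i) (.inl (i + z)) ≤ z.natAbs := by
  simpa using edist_le_natAbs_of_edist_add_le_one (G := genPetersen n k) Sum.inl (1 : ZMod n)
    (fun _ => edist_fromRel_le_one rfl) i z

lemma edist_inr_inr_add_le (i : ZMod n) (z : ℤ) :
    (genPetersen n k).edist (.inr i) (.inr (i + z * k)) ≤ z.natAbs := by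
  simpa using edist_le_natAbs_of_edist_add_le_one (G := genPetersen n k) Sum.inr (k : ZMod n)
    (fun _ => edist_fromRel_le_one rfl) i z

lemma adj_inl_inr (i : ZMod n) : (genPetersen n k).Adj (.inl i) (.inr i) := by
  simp [genPetersen, fromRel_adj]

lemma edist_inl_inr_le_one (i : ZMod n) : (genPetersen n k).edist (.inl i) (.inr i) ≤ 1 :=
  edist_fromRel_le_one rfl

lemma connected : (genPetersen n k).Connected := by
  have hout (j : ZMod n) : (genPetersen n k).Reachable (.inl 0) (.inl j) := by
    obtain ⟨z, rfl⟩ := ZMod.intCast_surjective j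
    have := edist_inl_inl_add_le (n := n) (k := k) 0 z
    rw [zero_add] at this
    exact reachable_of_edist_ne_top (ne_top_of_le_ne_top (ENat.natCast_ne_top _) this)
  rw [connected_iff_exists_forall_reachable]
  refine ⟨.inl 0, ?_⟩
  rintro (j | j)
  · exact hout j
  · exact (hout j).trans <| reachable_of_edist_ne_top <|
      ne_top_of_le_ne_top ENat.one_ne_top (edist_inl_inr_le_one j)

lemma dist_inl_inr_zero_le {a b : ℤ} {j : ZMod n} (h : (a * k + b : ZMod n) = j) :
    (genPetersen n k).dist (.inl j) (.inr 0) ≤ a.natAbs + b.natAbs + 1 := by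
  subst h
  apply dist_le_of_edist_le
  set x : ZMod n := a * k
  have hout := edist_inl_inl_add_le (n := n) (k := k) x b
  have hinn := edist_inr_inr_add_le (n := n) (k := k) 0 a
  rw [edist_comm] at hout hinn
  rw [zero_add] at hinn
  calc (genPetersen n k).edist (.inl (x + b)) (.inr 0)
      ≤ (genPetersen n k).edist (.inl (x + b)) (.inl x) +
          ((genPetersen n k).edist (.inl x) (.inr x) + (genPetersen n k).edist (.inr x) (.inr 0)) :=
        SimpleGraph.edist_triangle.trans (add_le_add_right SimpleGraph.edist_triangle _)
    _ ≤ b.natAbs + (1 + a.natAbs) := by gcongr; exact edist_inl_inr_le_one x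
    _ = (a.natAbs + b.natAbs + 1 : ℕ) := by push_cast; ring

lemma dist_inr_mul_inr_zero_le (a : ℤ) :
    (genPetersen n k).dist (.inr (a * k)) (.inr 0) ≤ a.natAbs := by
  apply dist_le_of_edist_le
  rw [edist_comm]
  simpa using edist_inr_inr_add_le (n := n) (k := k) 0 a

def HasShortLift (n k : ℕ) : ZMod n ⊕ ZMod n → ℕ → Prop
  | .inl j, ℓ => (∃ b : ℤ, (b : ZMod n) = j ∧ b.natAbs ≤ ℓ) ∨
      ∃ a b : ℤ, (a * k + b : ZMod n) = j ∧ a.natAbs + b.natAbs + 2 ≤ ℓ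
  | .inr j, ℓ => ∃ a b : ℤ, (a * k + b : ZMod n) = j ∧ a.natAbs + b.natAbs + 1 ≤ ℓ

lemma hasShortLift_length {x : ZMod n ⊕ ZMod n} (p : (genPetersen n k).Walk x (.inl 0)) :
    HasShortLift n k x p.length := by
  generalize hy : (.inl 0 : ZMod n ⊕ ZMod n) = y at p
  induction p with
  | nil => subst hy; exact Or.inl ⟨0, by simp, le_rfl⟩
  | @cons x y _ hxy q ih =>
    have hq := ih hy
    rw [Walk.length_cons]
    rw [genPetersen, fromRel_adj] at hxy
    obtain ⟨-, hxy⟩ := hxy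
    rcases x with i | i <;> rcases y with j | j <;> simp only [HasShortLift] at hq ⊢ <;>
      simp only at hxy
    · have hji : j = i + 1 ∨ j = i - 1 := by
        rcases hxy with h | h
        · exact .inl h
        · exact .inr (by rw [h]; ring)
      rcases hq with ⟨b, hb, hle⟩ | ⟨a, b, hab, hle⟩ <;> rcases hji with rfl | rfl
      · exact .inl ⟨b - 1, by push_cast; linear_combination hb, by omega⟩
      · exact .inl ⟨b + 1, by push_cast; linear_combination hb, by omega⟩
      · exact .inr ⟨a, b - 1, by push_cast; linear_combination hab, by omega⟩
      · exact .inr ⟨a, b + 1, by push_cast; linear_combination hab, by omega⟩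
    · have hij : i = j := by tauto
      subst hij
      obtain ⟨a, b, hab, hle⟩ := hq
      by_cases ha : a = 0
      · subst ha
        exact .inl ⟨b, by simpa using hab, by omega⟩
      · exact .inr ⟨a, b, hab, by omega⟩
    · have hij : i = j := by tauto
      subst hij
      rcases hq with ⟨b, hb, hle⟩ | ⟨a, b, hab, hle⟩
      · exact ⟨0, b, by simpa using hb, by omega⟩
      · exact ⟨a, b, hab, by omega⟩
    · have hji : j = i + k ∨ j = i - k := by
        rcases hxy with h | h
        · exact .inl h
        · exact .inr (by rw [h]; ring)
      obtain ⟨a, b, hab, hle⟩ := hq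
      rcases hji with rfl | rfl
      · exact ⟨a - 1, b, by push_cast; linear_combination hab, by omega⟩
      · exact ⟨a + 1, b, by push_cast; linear_combination hab, by omega⟩

lemma hasShortLift_dist (x : ZMod n ⊕ ZMod n) :
    HasShortLift n k x ((genPetersen n k).dist x (.inl 0)) := by
  obtain ⟨p, hp⟩ := connected.exists_walk_length_eq_dist x (.inl 0)
  exact hp ▸ hasShortLift_length p

lemma min_le_dist_inl_inl_zero [NeZero n] (j : ZMod n) :
    min j.valMinAbs.natAbs ((genPetersen n k).dist (.inl j) (.inr 0) + 1) ≤
      (genPetersen n k).dist (.inl j) (.inl 0) := by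
  rcases hasShortLift_dist (k := k) (.inl j) with ⟨b, hb, hle⟩ | ⟨a, b, hab, hle⟩
  · have := ZMod.natAbs_min_of_le_div_two n j.valMinAbs b (by simp [hb])
      (ZMod.natAbs_valMinAbs_le j)
    omega
  · have := dist_inl_inr_zero_le hab
    omega

lemma dist_inl_inr_zero_le_max (hk : 4 ≤ k) (j : ZMod n) :
    (genPetersen n k).dist (.inl j) (.inr 0) ≤
      max (k + 2 - j.valMinAbs.natAbs) (j.valMinAbs.natAbs - 2) := by
  obtain ⟨a, b, hab, hle⟩ := Int.exists_mul_add_eq_natAbs_add_le hk j.valMinAbs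
  have hj : (a * k + b : ZMod n) = j := by
    rw [← ZMod.coe_valMinAbs j, ← hab]
    push_cast
    ring
  exact (dist_inl_inr_zero_le hj).trans hle

lemma inl_mem_closerSet_inr_zero [NeZero n] (hk : 4 ≤ k) {j : ZMod n}
    (hj : k + 3 ≤ 2 * j.valMinAbs.natAbs) :
    .inl j ∈ closerSet (genPetersen n k) (.inr 0) (.inl 0) := by
  have hv := dist_inl_inr_zero_le_max hk j
  have hu := min_le_dist_inl_inl_zero (k := k) j
  simp only [closerSet, Set.mem_ofPred_eq]
  omega

lemma inl_notMem_closerSet_inl_zero [NeZero n] (hk : 4 ≤ k) {j : ZMod n}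
    (hj : k + 2 ≤ 2 * j.valMinAbs.natAbs) :
    .inl j ∉ closerSet (genPetersen n k) (.inl 0) (.inr 0) := by
  have hv := dist_inl_inr_zero_le_max hk j
  have hu := min_le_dist_inl_inl_zero (k := k) j
  simp only [closerSet, Set.mem_ofPred_eq, not_lt]
  omega

lemma inr_mul_mem_closerSet_inr_zero (hk : 0 < k) {a : ℤ} (ha : 2 * (a.natAbs * k) ≤ n) :
    .inr (a * k : ZMod n) ∈ closerSet (genPetersen n k) (.inr 0) (.inl 0) := by
  obtain ⟨a', b', hab, hle⟩ := hasShortLift_dist (k := k) (.inr (a * k : ZMod n))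
  have hmin := ZMod.natAbs_min_of_le_div_two n (a * k) (a' * k + b')
    (by push_cast; exact hab.symm) (by rw [Int.natAbs_mul, Int.natAbs_natCast]; omega)
  rw [Int.natAbs_mul, Int.natAbs_natCast] at hmin
  have hlift : a.natAbs ≤ a'.natAbs + b'.natAbs :=
    Nat.le_of_mul_le_mul_right (hmin.trans (Int.natAbs_mul_add_le hk a' b')) hk
  have := dist_inr_mul_inr_zero_le (n := n) (k := k) a
  simp only [closerSet, Set.mem_ofPred_eq]
  omega

lemma ncard_closerSet_inl_zero_add_two_le (hk : 4 ≤ k) (hke : Even k) (hn : k * (k + 2) < n) :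
    (closerSet (genPetersen n k) (.inl 0) (.inr 0)).ncard + 2 ≤
      (closerSet (genPetersen n k) (.inr 0) (.inl 0)).ncard := by
  have : NeZero n := ⟨by omega⟩
  obtain ⟨K, rfl⟩ := hke
  have hKn : 2 * (K + 1) * (K + K) < n := by linarith
  set A := closerSet (genPetersen n (K + K)) (.inr 0) (.inl 0)
  set B := closerSet (genPetersen n (K + K)) (.inl 0) (.inr 0)
  set T := (fun a : ℤ => (a * ↑(K + K) : ZMod n)) '' Set.Icc (-(K + 1 : ℕ)) (K + 1 : ℕ)
  have hT : T.ncard = K + K + 3 := by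
    rw [(ZMod.injOn_intCast_mul (by omega) hKn).ncard_image, ← Finset.coe_Icc,
      Set.ncard_coe_finset, Int.card_Icc]
    omega
  have hTA : T ⊆ Sum.inr ⁻¹' A := by
    rintro _ ⟨a, ha, rfl⟩
    refine inr_mul_mem_closerSet_inr_zero (by omega) ?_
    have : a.natAbs * (K + K) ≤ (K + 1) * (K + K) := Nat.mul_le_mul_right _ (by
      rw [Set.mem_Icc] at ha; omega)
    linarith
  have hAout : {j : ZMod n | j.valMinAbs.natAbs ≤ K + 1}ᶜ ⊆ Sum.inl ⁻¹' A := fun j hj =>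
    inl_mem_closerSet_inr_zero hk (by simp only [Set.mem_compl_iff, Set.mem_ofPred_eq] at hj; omega)
  have hBout : Sum.inl ⁻¹' B ⊆ {j : ZMod n | j.valMinAbs.natAbs ≤ K} := fun j hj => by
    by_contra h
    exact inl_notMem_closerSet_inl_zero hk (by simp only [Set.mem_ofPred_eq] at h; omega) hj
  have hBin : Sum.inr ⁻¹' B ⊆ (Sum.inr ⁻¹' A)ᶜ := fun _ hB hA => lt_asymm (α := ℕ) hA hB
  have hA_out := Set.ncard_le_ncard hAout
  have hA_in := Set.ncard_le_ncard hTA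
  have hB_out := Set.ncard_le_ncard hBout
  have hB_in := Set.ncard_le_ncard hBin
  rw [Set.ncard_compl, Nat.card_zmod] at hA_out hB_in
  have hcard_le_K_succ := ZMod.ncard_natAbs_valMinAbs_le (n := n) (K + 1)
  have hcard_le_K := ZMod.ncard_natAbs_valMinAbs_le (n := n) K
  rw [Set.ncard_eq_ncard_preimage_inl_add_ncard_preimage_inr A,
    Set.ncard_eq_ncard_preimage_inl_add_ncard_preimage_inr B]
  omega

end genPetersen

theorem stmt_14_general (n k : ℕ) (hk : 4 ≤ k) (hke : Even k) (hn : k * (k + 2) < n) :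
    (∀ i : ℕ, i ≤ n / (2 * k) →
      Sum.inr (((i * k : ℕ) : ZMod n)) ∈
        closerSet (genPetersen n k) (Sum.inr 0) (Sum.inl 0) ∧
      Sum.inr (-((i * k : ℕ) : ZMod n)) ∈
        closerSet (genPetersen n k) (Sum.inr 0) (Sum.inl 0)) ∧
    2 * (closerSet (genPetersen n k) (Sum.inr 0) (Sum.inl 0)).ncard
        + (eqDistSet (genPetersen n k) (Sum.inl 0) (Sum.inr 0)).ncard ≥ 2 * n + 2 ∧
    2 * (closerSet (genPetersen n k) (Sum.inr 0) (Sum.inl 0)).ncard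
        + (eqDistSet (genPetersen n k) (Sum.inl 0) (Sum.inr 0)).ncard > 2 * n ∧
    ¬ IsDistBalanced (genPetersen n k) := by
  have : NeZero n := ⟨by omega⟩
  have hunbalanced := genPetersen.ncard_closerSet_inl_zero_add_two_le hk hke hn
  have hpartition := ncard_closerSet_add_ncard_closerSet_add_ncard_eqDistSet
    (genPetersen n k) (.inl 0) (.inr 0)
  rw [Nat.card_sum, Nat.card_zmod] at hpartition
  refine ⟨fun i hi => ?_, by omega, by omega, fun hbal => ?_⟩
  · have hi' : 2 * ((i : ℤ).natAbs * k) ≤ n := by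
      rw [Int.natAbs_natCast]
      linarith [(Nat.le_div_iff_mul_le (by omega)).mp hi]
    constructor
    · simpa using genPetersen.inr_mul_mem_closerSet_inr_zero (by omega) hi'
    · have hneg : 2 * ((-i : ℤ).natAbs * k) ≤ n := by rwa [Int.natAbs_neg]
      simpa using genPetersen.inr_mul_mem_closerSet_inr_zero (by omega) hneg
  · have := hbal (.inr 0) (.inl 0) (genPetersen.adj_inl_inr 0).symm
    omega

theorem stmt_14 (n k : ℕ) (hk : 4 ≤ k) (hke : Even k) (hn : k * (k + 2) < n)
    (hnd : ¬ k ∣ n) :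
    (∀ i : ℕ, i ≤ n / (2 * k) →
      Sum.inr (((i * k : ℕ) : ZMod n)) ∈
        closerSet (genPetersen n k) (Sum.inr 0) (Sum.inl 0) ∧
      Sum.inr (-((i * k : ℕ) : ZMod n)) ∈
        closerSet (genPetersen n k) (Sum.inr 0) (Sum.inl 0)) ∧
    2 * (closerSet (genPetersen n k) (Sum.inr 0) (Sum.inl 0)).ncard
        + (eqDistSet (genPetersen n k) (Sum.inl 0) (Sum.inr 0)).ncard ≥ 2 * n + 2 ∧
    2 * (closerSet (genPetersen n k) (Sum.inr 0) (Sum.inl 0)).ncard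
        + (eqDistSet (genPetersen n k) (Sum.inl 0) (Sum.inr 0)).ncard > 2 * n ∧
    ¬ IsDistBalanced (genPetersen n k) :=
  stmt_14_general n k hk hke hn
end
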